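/- arXiv:2507.00730 — 3 statements merged into one kernel-verified Lean document; each statement's English description precedes it below -/
import Mathlib

section
/- For all 1 ≤ r, s, r', s' ≤ p, all 1 ≤ a, b ≤ d', and all integers k, l ≥ 0, the commutator in End_ℂ(P) satisfies ⁅F_a(r,s;k), F_b(r',s';l)⁆ = δ_{a,b}·( δ_{s,r'}·F_a(r,s';k+l) − δ_{r,s'}·F_a(r',s;k+l) ). (This is the even–even y-part of Proposition 4.2 of the paper: the operators F_a(r,s;k), images of E^r_s ⊗ t̄_{w_a}^k, realize the Takiff algebra relations of ⊕_{a=1}^{d'} gl_{p+q+m+n}[t_{w_a}]/t_{w_a}^{ξ_a} on the Fock space, restricted to the bosonic generators E^r_s with 1 ≤ r,s ≤ p.) -/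
open MvPolynomial

/-- Multiplication by the variable `v`, as a `ℂ`-linear endomorphism of the
polynomial ring. -/
noncomputable def mulOp {σ : Type*} (v : σ) :
    Module.End ℂ (MvPolynomial σ ℂ) :=
  LinearMap.mulLeft ℂ (X v)

/-- The partial derivative with respect to the variable `v`, as a `ℂ`-linear endomorphism
of the polynomial ring. -/
noncomputable def derOp {σ : Type*} (v : σ) :
    Module.End ℂ (MvPolynomial σ ℂ) :=
  (pderiv v).toLinearMap

/-- The variable `y^α_r` of the Fock space `MvPolynomial (Fin d × (Fin p ⊕ Fin m)) ℂ`,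
with superscript index `α` (0-based, a natural number) and subscript `r : Fin p`. -/
def yvar (d p m : ℕ) (α : ℕ) (h : α < d) (r : Fin p) : Fin d × (Fin p ⊕ Fin m) :=
  (⟨α, h⟩, Sum.inl r)

/-- The variable `x^α_i`, with superscript index `α` (0-based) and subscript `i : Fin m`. -/
def xvar (d p m : ℕ) (α : ℕ) (h : α < d) (i : Fin m) : Fin d × (Fin p ⊕ Fin m) :=
  (⟨α, h⟩, Sum.inr i)

/-- `F_a(r,s;k) = -Σ_{α=D+1}^{D+ξ-k} ∂_{y^{α+k}_r} ∘ y^α_s`, where `D = d_a`, `ξ = ξ_a`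
(the superscripts are written 0-based, so `α` runs over `D, D+1, …, D+ξ-k-1`). -/
noncomputable def Fop (d p m : ℕ) (D ξ : ℕ) (r s : Fin p) (k : ℕ) :
    Module.End ℂ (MvPolynomial (Fin d × (Fin p ⊕ Fin m)) ℂ) :=
  - ∑ α ∈ Finset.range (ξ - k),
      if h : D + α + k < d then
        derOp (yvar d p m (D + α + k) h r) * mulOp (yvar d p m (D + α) (by omega) s)
      else 0

/-- `H_a(r,j;k) = Σ_{α=D+1}^{D+ξ-k} ∂_{y^{α+k}_r} ∘ ∂_{x^α_j}`, where `D = d_a`,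
`ξ = ξ_a`. -/
noncomputable def Hop (d p m : ℕ) (D ξ : ℕ) (r : Fin p) (j : Fin m) (k : ℕ) :
    Module.End ℂ (MvPolynomial (Fin d × (Fin p ⊕ Fin m)) ℂ) :=
  ∑ α ∈ Finset.range (ξ - k),
      if h : D + α + k < d then
        derOp (yvar d p m (D + α + k) h r) * derOp (xvar d p m (D + α) (by omega) j)
      else 0

/-- `K_a(i,s;k) = -Σ_{α=D+1}^{D+ξ-k} x^{α+k}_i ∘ y^α_s`, where `D = d_a`, `ξ = ξ_a`. -/
noncomputable def Kop (d p m : ℕ) (D ξ : ℕ) (i : Fin m) (s : Fin p) (k : ℕ) :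
    Module.End ℂ (MvPolynomial (Fin d × (Fin p ⊕ Fin m)) ℂ) :=
  - ∑ α ∈ Finset.range (ξ - k),
      if h : D + α + k < d then
        mulOp (xvar d p m (D + α + k) h i) * mulOp (yvar d p m (D + α) (by omega) s)
      else 0

/-- `G_a(i,j;k) = Σ_{α=D+1}^{D+ξ-k} x^{α+k}_i ∘ ∂_{x^α_j}`, where `D = d_a`, `ξ = ξ_a`. -/
noncomputable def Gop (d p m : ℕ) (D ξ : ℕ) (i j : Fin m) (k : ℕ) :
    Module.End ℂ (MvPolynomial (Fin d × (Fin p ⊕ Fin m)) ℂ) :=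
  ∑ α ∈ Finset.range (ξ - k),
      if h : D + α + k < d then
        mulOp (xvar d p m (D + α + k) h i) * derOp (xvar d p m (D + α) (by omega) j)
      else 0

/-!
The operators `∂_u ∘ μ_v` realise `gl` inside the Weyl algebra: since
`[∂_u μ_v, ∂_{u'} μ_{v'}] = δ_{u v'} ∂_{u'} μ_v - δ_{u' v} ∂_u μ_{v'}`, the linear map
`ρ A = Σ_{u,v} A_{uv} ∂_u μ_v` sends the matrix commutator `B A - A B` to `[ρ A, ρ B]`.
Now `F_a(r,s;k) = ρ(-M)`, where `M` shifts the `a`-th block of `y`-variables by `k` and carries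
the colour `E_{rs}`. Within one block these shift matrices multiply like `t^k E_{rs}` in
`gl_p[t]/t^{ξ_a}`, and matrices supported on disjoint blocks multiply to zero; this is the
claimed relation.
-/

namespace MvPolynomial

theorem pderiv_pderiv_comm {R σ : Type*} [CommRing R] (i j : σ) (f : MvPolynomial σ R) :
    pderiv i (pderiv j f) = pderiv j (pderiv i f) := by
  have hbracket : ⁅pderiv i, pderiv j⁆ = (0 : Derivation R (MvPolynomial σ R) _) :=
    derivation_ext fun k => by
      classical
      rw [Derivation.commutator_apply]
      simp only [pderiv_X, Pi.single_apply]
      split_ifs <;> simp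
  have := congr($hbracket f)
  rwa [Derivation.commutator_apply, Derivation.zero_apply, sub_eq_zero] at this

end MvPolynomial

section Weyl

variable {σ : Type*}

theorem commute_derOp (u v : σ) : Commute (derOp u) (derOp v) :=
  LinearMap.ext fun f => pderiv_pderiv_comm u v f

theorem commute_mulOp (u v : σ) : Commute (mulOp u) (mulOp v) :=
  LinearMap.ext fun f => by simp only [Module.End.mul_apply, mulOp, LinearMap.mulLeft_apply]; ring

theorem derOp_mul_mulOp [DecidableEq σ] (u v : σ) :
    derOp u * mulOp v = mulOp v * derOp u + if u = v then 1 else 0 := by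
  refine LinearMap.ext fun f => ?_
  rcases eq_or_ne u v with rfl | huv
  · simp [derOp, mulOp, add_comm]
  · simp [derOp, mulOp, huv, pderiv_X_of_ne (Ne.symm huv)]

theorem commutator_derOp_mul_mulOp [DecidableEq σ] (u v u' v' : σ) :
    derOp u * mulOp v * (derOp u' * mulOp v') - derOp u' * mulOp v' * (derOp u * mulOp v)
      = (if u = v' then derOp u' * mulOp v else 0)
        - if u' = v then derOp u * mulOp v' else 0 := by
  have hswap : derOp u * (derOp u' * (mulOp v * mulOp v'))
      = derOp u' * (derOp u * (mulOp v' * mulOp v)) := by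
    rw [(commute_mulOp v v').eq, ← mul_assoc, ← mul_assoc, (commute_derOp u u').eq]
    simp only [mul_assoc]
  calc _ = derOp u * (mulOp v * derOp u') * mulOp v' - derOp u' * (mulOp v' * derOp u) * mulOp v := by
          noncomm_ring
    _ = _ := by
      rw [eq_sub_of_add_eq (derOp_mul_mulOp u' v).symm, eq_sub_of_add_eq (derOp_mul_mulOp u v').symm]
      simp only [mul_sub, sub_mul, mul_ite, ite_mul, mul_one, mul_zero, zero_mul, mul_assoc, hswap]
      abel

end Weyl

theorem Matrix.single_mul_single_eq_ite {ι R : Type*} [Fintype ι] [DecidableEq ι]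
    [NonUnitalNonAssocSemiring R] (i j j' k : ι) (a b : R) :
    Matrix.single i j a * Matrix.single j' k b = if j = j' then Matrix.single i k (a * b) else 0 := by
  split_ifs with h
  · subst h; exact Matrix.single_mul_single_same ..
  · exact Matrix.single_mul_single_of_ne _ _ _ _ h _

section Oscillator

variable {σ : Type*} [Fintype σ] [DecidableEq σ]

noncomputable def oscillatorRep : Matrix σ σ ℂ →ₗ[ℂ] Module.End ℂ (MvPolynomial σ ℂ) where
  toFun A := ∑ u, ∑ v, A u v • (derOp u * mulOp v)
  map_add' A B := by simp only [Matrix.add_apply, add_smul, Finset.sum_add_distrib]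
  map_smul' c A := by
    simp only [Matrix.smul_apply, smul_eq_mul, mul_smul, Finset.smul_sum, RingHom.id_apply]

theorem oscillatorRep_single (u v : σ) (c : ℂ) :
    oscillatorRep (Matrix.single u v c) = c • (derOp u * mulOp v) := by
  simp [oscillatorRep, Matrix.single_apply, ite_and]

theorem commutator_oscillatorRep_single (u v u' v' : σ) (a b : ℂ) :
    oscillatorRep (Matrix.single u v a) * oscillatorRep (Matrix.single u' v' b)
        - oscillatorRep (Matrix.single u' v' b) * oscillatorRep (Matrix.single u v a)
      = oscillatorRep (Matrix.single u' v' b * Matrix.single u v a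
          - Matrix.single u v a * Matrix.single u' v' b) := by
  have h := congrArg ((a * b) • ·) (commutator_derOp_mul_mulOp u v u' v')
  simp only [smul_sub, smul_ite, smul_zero] at h
  rw [oscillatorRep_single, oscillatorRep_single, smul_mul_smul_comm, smul_mul_smul_comm,
    mul_comm b a, h]
  simp only [Matrix.single_mul_single_eq_ite, map_sub, apply_ite oscillatorRep, map_zero,
    oscillatorRep_single, mul_comm b a, eq_comm (a := v'), eq_comm (a := v)]

theorem oscillatorRep_mul_sub_mul (A B : Matrix σ σ ℂ) :
    oscillatorRep A * oscillatorRep B - oscillatorRep B * oscillatorRep A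
      = oscillatorRep (B * A - A * B) := by
  induction A using Matrix.induction_on' with
  | h_zero => simp
  | h_add A₁ A₂ h₁ h₂ =>
    calc _ = (oscillatorRep A₁ * oscillatorRep B - oscillatorRep B * oscillatorRep A₁)
          + (oscillatorRep A₂ * oscillatorRep B - oscillatorRep B * oscillatorRep A₂) := by
          rw [map_add]; noncomm_ring
      _ = _ := by rw [h₁, h₂, ← map_add]; congr 1; noncomm_ring
  | h_std_basis u v a =>
    induction B using Matrix.induction_on' with
    | h_zero => simp
    | h_add B₁ B₂ h₁ h₂ =>
      calc _ = (oscillatorRep (Matrix.single u v a) * oscillatorRep B₁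
              - oscillatorRep B₁ * oscillatorRep (Matrix.single u v a))
            + (oscillatorRep (Matrix.single u v a) * oscillatorRep B₂
              - oscillatorRep B₂ * oscillatorRep (Matrix.single u v a)) := by
            rw [map_add]; noncomm_ring
        _ = _ := by rw [h₁, h₂, ← map_add]; congr 1; noncomm_ring
    | h_std_basis u' v' b => exact commutator_oscillatorRep_single u v u' v' a b

end Oscillator

theorem Finset.sum_Iio_add_le_sum_Iio {ι M : Type*} [LinearOrder ι] [LocallyFiniteOrderBot ι]
    [AddCommMonoid M] [PartialOrder M] [CanonicallyOrderedAdd M] (f : ι → M) {a b : ι}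
    (hab : a < b) : ∑ i ∈ Iio a, f i + f a ≤ ∑ i ∈ Iio b, f i := by
  rw [sum_Iio_add_eq_sum_Iic]
  exact sum_le_sum_of_subset fun i hi => mem_Iio.2 ((mem_Iic.1 hi).trans_lt hab)

noncomputable def ySingle (d p m : ℕ) (i j : ℕ) (r s : Fin p) :
    Matrix (Fin d × (Fin p ⊕ Fin m)) (Fin d × (Fin p ⊕ Fin m)) ℂ :=
  if h : i < d ∧ j < d then Matrix.single (yvar d p m i h.1 r) (yvar d p m j h.2 s) 1 else 0

noncomputable def blockShift (d p m : ℕ) (D ξ : ℕ) (r s : Fin p) (k : ℕ) :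
    Matrix (Fin d × (Fin p ⊕ Fin m)) (Fin d × (Fin p ⊕ Fin m)) ℂ :=
  ∑ α ∈ Finset.range (ξ - k), ySingle d p m (D + α + k) (D + α) r s

section BlockShift

variable {d p m : ℕ}

-- With `j ≤ i`, an out-of-range `j` forces `i` out of range, and then both sides vanish.
theorem ySingle_mul_ySingle {i j j' l : ℕ} (hji : j ≤ i) (r s r' s' : Fin p) :
    ySingle d p m i j r s * ySingle d p m j' l r' s'
      = if j = j' ∧ s = r' then ySingle d p m i l r s' else 0 := by
  unfold ySingle
  split_ifs <;> simp_all [yvar] <;> omega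

theorem Fop_eq_oscillatorRep (D ξ : ℕ) (r s : Fin p) (k : ℕ) :
    Fop d p m D ξ r s k = oscillatorRep (-blockShift d p m D ξ r s k) := by
  unfold Fop blockShift
  rw [map_neg, map_sum]
  refine congrArg _ (Finset.sum_congr rfl fun α _ => ?_)
  unfold ySingle
  split_ifs <;> first | omega | simp [oscillatorRep_single]

theorem blockShift_mul_blockShift_self (D ξ : ℕ) (r s r' s' : Fin p) (k l : ℕ) :
    blockShift d p m D ξ r s k * blockShift d p m D ξ r' s' l
      = if s = r' then blockShift d p m D ξ r s' (k + l) else 0 := by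
  unfold blockShift
  rw [Finset.sum_mul_sum]
  split_ifs with hs
  · have hterm : ∀ α β, ySingle d p m (D + α + k) (D + α) r s * ySingle d p m (D + β + l) (D + β) r' s'
        = if α = β + l then ySingle d p m (D + α + k) (D + β) r s' else 0 := fun α β => by
      rw [ySingle_mul_ySingle (by omega)]
      exact if_congr (by omega) rfl rfl
    simp only [hterm]
    rw [Finset.sum_comm]
    simp only [Finset.sum_ite_eq', Finset.mem_range]
    rw [← Finset.sum_filter]
    have hrange : {β ∈ Finset.range (ξ - l) | β + l < ξ - k} = Finset.range (ξ - (k + l)) := by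
      ext β; simp only [Finset.mem_filter, Finset.mem_range]; omega
    rw [hrange]
    exact Finset.sum_congr rfl fun β _ => by
      rw [show D + (β + l) + k = D + β + (k + l) by omega]
  · refine Finset.sum_eq_zero fun α _ => Finset.sum_eq_zero fun β _ => ?_
    rw [ySingle_mul_ySingle (by omega), if_neg (by tauto)]

theorem blockShift_mul_blockShift_of_disjoint {D ξ D' ξ' : ℕ} (hdisj : D + ξ ≤ D' ∨ D' + ξ' ≤ D)
    (r s r' s' : Fin p) (k l : ℕ) :
    blockShift d p m D ξ r s k * blockShift d p m D' ξ' r' s' l = 0 := by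
  unfold blockShift
  rw [Finset.sum_mul_sum]
  refine Finset.sum_eq_zero fun α hα => Finset.sum_eq_zero fun β hβ => ?_
  rw [Finset.mem_range] at hα hβ
  rw [ySingle_mul_ySingle (by omega), if_neg (by omega)]

end BlockShift

theorem stmt8_general (p m : ℕ) (d' : ℕ)
    (ξ : Fin d' → ℕ) (d : ℕ)
    (D : Fin d' → ℕ)
    (hD : ∀ a, D a = ∑ b ∈ Finset.univ.filter (fun b => b < a), ξ b)
    (a b : Fin d') (r s r' s' : Fin p) (k l : ℕ) :
    Fop d p m (D a) (ξ a) r s k * Fop d p m (D b) (ξ b) r' s' l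
      - Fop d p m (D b) (ξ b) r' s' l * Fop d p m (D a) (ξ a) r s k
    = if a = b then
        (if s = r' then Fop d p m (D a) (ξ a) r s' (k + l) else 0)
          - (if r = s' then Fop d p m (D a) (ξ a) r' s (k + l) else 0)
      else 0 := by
  have hdisj (hab : a ≠ b) : D a + ξ a ≤ D b ∨ D b + ξ b ≤ D a := by
    simp only [hD, Finset.filter_gt_eq_Iio]
    rcases hab.lt_or_gt with h | h
    · exact .inl (Finset.sum_Iio_add_le_sum_Iio ξ h)
    · exact .inr (Finset.sum_Iio_add_le_sum_Iio ξ h)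
  simp only [Fop_eq_oscillatorRep, oscillatorRep_mul_sub_mul, neg_mul_neg]
  -- pull both sides back to an identity between shift matrices
  rw [← map_zero oscillatorRep]
  simp only [← apply_ite oscillatorRep, ← map_sub]
  congr 1
  by_cases hab : a = b
  · subst hab
    rw [if_pos rfl, blockShift_mul_blockShift_self, blockShift_mul_blockShift_self, add_comm l k]
    simp only [eq_comm (a := s')]
    split_ifs <;> abel
  · rw [if_neg hab, blockShift_mul_blockShift_of_disjoint (hdisj hab),
      blockShift_mul_blockShift_of_disjoint (hdisj hab).symm, sub_zero]

/-- The operators `F_a(r,s;k)` satisfy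
`⁅F_a(r,s;k), F_b(r',s';l)⁆ = δ_{ab} (δ_{s r'} F_a(r,s';k+l) - δ_{r s'} F_a(r',s;k+l))`,
the Takiff algebra relations of `⊕_{a=1}^{d'} gl_{p+q+m+n}[t]/t^{ξ_a}` restricted to the
bosonic generators `E^r_s`, `1 ≤ r, s ≤ p`. -/
theorem stmt8 (p m : ℕ) (hpm : 1 ≤ p + m) (d' : ℕ) (hd' : 1 ≤ d')
    (ξ : Fin d' → ℕ) (hξ : ∀ a, 0 < ξ a) (d : ℕ) (hd : d = ∑ a, ξ a)
    (D : Fin d' → ℕ)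
    (hD : ∀ a, D a = ∑ b ∈ Finset.univ.filter (fun b => b < a), ξ b)
    (a b : Fin d') (r s r' s' : Fin p) (k l : ℕ) :
    Fop d p m (D a) (ξ a) r s k * Fop d p m (D b) (ξ b) r' s' l
      - Fop d p m (D b) (ξ b) r' s' l * Fop d p m (D a) (ξ a) r s k
    = if a = b then
        (if s = r' then Fop d p m (D a) (ξ a) r s' (k + l) else 0)
          - (if r = s' then Fop d p m (D a) (ξ a) r' s (k + l) else 0)
      else 0 :=
  stmt8_general p m d' ξ d D hD a b r s r' s' k l
end

section
/- For all 1 ≤ r, s ≤ p, all 1 ≤ i, j ≤ m, all 1 ≤ a, b ≤ d', and all integers k, l ≥ 0, the commutator in End_ℂ(P) satisfies ⁅H_a(r,j;k), K_b(i,s;l)⁆ = δ_{a,b}·( δ_{i,j}·F_a(r,s;k+l) − δ_{r,s}·G_a(i,j;k+l) ). (This is identity (ovphi-e2) verified in the proof of Proposition 4.2 of the paper, corresponding to the Takiff relation [E^r_{p+q+j} ⊗ t̄_{w_a}^k, E^{p+q+i}_s ⊗ t̄_{w_b}^l] = δ_{a,b}( δ_{i,j} E^r_s ⊗ t̄_{w_a}^{k+l}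 − δ_{r,s} E^{p+q+i}_{p+q+j} ⊗ t̄_{w_a}^{k+l} ), in the purely even case 1 ≤ r,s ≤ p, 1 ≤ i,j ≤ m.) -/
open MvPolynomial

/-!
Each summand of `H` is `A * B` with `A = ∂_{y^{α+k}_r}`, `B = ∂_{x^α_j}` and each summand of `-K`
is `C * E` with `C = x^{β+l}_i`, `E = y^β_s`. Since `A` commutes with `C` and `B` with `E`,
`⁅A * B, C * E⁆ = A * ⁅B, C⁆ * E + C * ⁅A, E⁆ * B`, and the canonical commutation relations
`⁅∂_v, x_w⁆ = δ_{vw}` keep only the terms with `α = β + l`, which sum to `∂_{y^{β+k+l}_r} y^β_s`,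
i.e. to `-F(k + l)`, and those with `β = α + k`, which sum to `G(k + l)`. This order of the factors
produces `F` and `G` directly, with no normal ordering. For `a ≠ b` the two blocks of superscripts
are disjoint, so every commutation relation contributes `0`.
-/

open Finset

attribute [local instance] LieRing.ofAssociativeRing

theorem lie_mul_mul_of_commute {R : Type*} [Ring R] {a b c e : R}
    (hac : Commute a c) (hbe : Commute b e) :
    ⁅a * b, c * e⁆ = a * ⁅b, c⁆ * e + c * ⁅a, e⁆ * b := by
  have key : a * c * (b * e) = c * a * (e * b) := by rw [hac.eq, hbe.eq]
  simp only [Ring.lie_def, mul_sub, sub_mul, ← mul_assoc] at key ⊢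
  rw [key]
  abel

theorem lie_derOp_mulOp {σ : Type*} [DecidableEq σ] (v w : σ) :
    ⁅derOp v, mulOp w⁆ = if w = v then 1 else 0 := by
  refine LinearMap.ext fun f => ?_
  simp only [Ring.lie_def, derOp, mulOp, LinearMap.sub_apply, Module.End.mul_apply,
    LinearMap.mulLeft_apply, Derivation.coeFn_coe, pderiv_mul, pderiv_X]
  split_ifs with h <;> simp [h]

theorem sum_range_sum_range_ite_add {M : Type*} [AddCommMonoid M] (N k l : ℕ)
    (f : ℕ → ℕ → M) :
    ∑ α ∈ range (N - k), ∑ β ∈ range (N - l), (if α + k = β then f α β else 0)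
      = ∑ α ∈ range (N - (k + l)), f α (α + k) := by
  simp only [sum_ite_eq, mem_range]
  rw [← sum_filter]
  congr 1
  ext α
  simp only [mem_filter, mem_range]
  omega

section Blocks

variable {ι : Type*} [Fintype ι] [LinearOrder ι] (f : ι → ℕ)

theorem sum_filter_lt_add_le_sum_filter_lt {a c : ι} (hac : a < c) :
    ∑ b ∈ univ.filter (· < a), f b + f a ≤ ∑ b ∈ univ.filter (· < c), f b := by
  rw [add_comm, ← sum_insert (by simp)]
  refine sum_le_sum_of_subset fun x hx => ?_
  simp only [mem_insert, mem_filter, mem_univ, true_and] at hx ⊢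
  rcases hx with rfl | hx
  exacts [hac, hx.trans hac]

theorem sum_filter_lt_add_le_sum (a : ι) :
    ∑ b ∈ univ.filter (· < a), f b + f a ≤ ∑ b, f b := by
  rw [add_comm, ← sum_insert (by simp)]
  exact sum_le_sum_of_subset (subset_univ _)

theorem sum_filter_lt_add_ne {a b : ι} (hab : a ≠ b) {x y : ℕ} (hx : x < f a) (hy : y < f b) :
    ∑ c ∈ univ.filter (· < a), f c + x ≠ ∑ c ∈ univ.filter (· < b), f c + y := by
  rcases hab.lt_or_gt with h | h
  · have := sum_filter_lt_add_le_sum_filter_lt f h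
    omega
  · have := sum_filter_lt_add_le_sum_filter_lt f h
    omega

end Blocks

-- `mulOp`, `derOp` indexed by a natural-number level and set to `0` at levels `n ≥ d`, so that
-- `Hop`, `Kop`, `Fop`, `Gop` become plain sums of products without bound proofs.
noncomputable def mulAt {S : Type*} (d n : ℕ) (t : S) : Module.End ℂ (MvPolynomial (Fin d × S) ℂ) :=
  if h : n < d then mulOp (⟨n, h⟩, t) else 0

noncomputable def derAt {S : Type*} (d n : ℕ) (t : S) : Module.End ℂ (MvPolynomial (Fin d × S) ℂ) :=
  if h : n < d then derOp (⟨n, h⟩, t) else 0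

section Levels

variable {S : Type*} [DecidableEq S] {d : ℕ}

theorem lie_derAt_mulAt (n n' : ℕ) (t t' : S) :
    ⁅derAt d n t, mulAt d n' t'⁆ = if n' = n ∧ t' = t ∧ n < d then 1 else 0 := by
  unfold derAt mulAt
  by_cases hn : n < d
  · by_cases hn' : n' < d
    · rw [dif_pos hn, dif_pos hn', lie_derOp_mulOp]
      simp only [Prod.ext_iff, Fin.ext_iff, hn, and_true]
    · rw [dif_pos hn, dif_neg hn', lie_zero, if_neg]
      rintro ⟨rfl, -, -⟩
      exact hn' hn
  · rw [dif_neg hn, zero_lie, if_neg]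
    rintro ⟨-, -, h⟩
    exact hn h

theorem commute_derAt_mulAt {t t' : S} (h : t' ≠ t) (n n' : ℕ) :
    Commute (derAt d n t) (mulAt d n' t') := by
  rw [commute_iff_lie_eq, lie_derAt_mulAt, if_neg (by tauto)]

end Levels

section Operators

variable {d p m : ℕ} (D ξ : ℕ)

theorem Hop_eq_sum (r : Fin p) (j : Fin m) (k : ℕ) :
    Hop d p m D ξ r j k
      = ∑ α ∈ range (ξ - k), derAt d (D + α + k) (.inl r) * derAt d (D + α) (.inr j) := by
  refine sum_congr rfl fun α _ => ?_
  unfold derAt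
  split_ifs <;> first | rfl | omega

theorem Kop_eq_sum (i : Fin m) (s : Fin p) (k : ℕ) :
    Kop d p m D ξ i s k
      = -∑ α ∈ range (ξ - k), mulAt d (D + α + k) (.inr i) * mulAt d (D + α) (.inl s) := by
  rw [Kop, neg_inj]
  refine sum_congr rfl fun α _ => ?_
  unfold mulAt
  split_ifs <;> first | rfl | omega

theorem Fop_eq_sum (r s : Fin p) (k : ℕ) :
    Fop d p m D ξ r s k
      = -∑ α ∈ range (ξ - k), derAt d (D + α + k) (.inl r) * mulAt d (D + α) (.inl s) := by
  rw [Fop, neg_inj]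
  refine sum_congr rfl fun α _ => ?_
  unfold derAt mulAt
  split_ifs <;> first | rfl | omega

theorem Gop_eq_sum (i j : Fin m) (k : ℕ) :
    Gop d p m D ξ i j k
      = ∑ α ∈ range (ξ - k), mulAt d (D + α + k) (.inr i) * derAt d (D + α) (.inr j) := by
  refine sum_congr rfl fun α _ => ?_
  unfold derAt mulAt
  split_ifs <;> first | rfl | omega

theorem lie_Hop_Kop (D' ξ' : ℕ) (r s : Fin p) (i j : Fin m) (k l : ℕ) :
    ⁅Hop d p m D ξ r j k, Kop d p m D' ξ' i s l⁆
      = -∑ α ∈ range (ξ - k), ∑ β ∈ range (ξ' - l),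
          (derAt d (D + α + k) (Sum.inl r)
              * ⁅derAt d (D + α) (Sum.inr j : Fin p ⊕ Fin m), mulAt d (D' + β + l) (Sum.inr i)⁆
              * mulAt d (D' + β) (Sum.inl s)
            + mulAt d (D' + β + l) (Sum.inr i)
              * ⁅derAt d (D + α + k) (Sum.inl r : Fin p ⊕ Fin m), mulAt d (D' + β) (Sum.inl s)⁆
              * derAt d (D + α) (Sum.inr j)) := by
  rw [Hop_eq_sum, Kop_eq_sum, lie_neg, sum_lie_sum]
  refine congrArg _ (sum_congr rfl fun α _ => sum_congr rfl fun β _ => ?_)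
  exact lie_mul_mul_of_commute (commute_derAt_mulAt Sum.inr_ne_inl _ _)
    (commute_derAt_mulAt Sum.inl_ne_inr _ _)

theorem lie_Hop_Kop_self (hb : D + ξ ≤ d) (r s : Fin p) (i j : Fin m) (k l : ℕ) :
    ⁅Hop d p m D ξ r j k, Kop d p m D ξ i s l⁆
      = (if i = j then Fop d p m D ξ r s (k + l) else 0)
          - (if r = s then Gop d p m D ξ i j (k + l) else 0) := by
  have hBC : ∀ α ∈ range (ξ - k), ∀ β,
      ⁅derAt d (D + α) (Sum.inr j : Fin p ⊕ Fin m),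
        mulAt d (D + β + l) (Sum.inr i : Fin p ⊕ Fin m)⁆
        = if i = j then if β + l = α then 1 else 0 else 0 := by
    intro α hα β
    rw [mem_range] at hα
    rw [lie_derAt_mulAt, ← ite_and]
    simp only [Sum.inr.injEq]
    exact if_congr ⟨fun ⟨_, hij, _⟩ => ⟨hij, by omega⟩, fun ⟨hij, _⟩ => ⟨by omega, hij, by omega⟩⟩
      rfl rfl
  have hAE : ∀ α ∈ range (ξ - k), ∀ β,
      ⁅derAt d (D + α + k) (Sum.inl r : Fin p ⊕ Fin m),
        mulAt d (D + β) (Sum.inl s : Fin p ⊕ Fin m)⁆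
        = if r = s then if α + k = β then 1 else 0 else 0 := by
    intro α hα β
    rw [mem_range] at hα
    rw [lie_derAt_mulAt, ← ite_and]
    simp only [Sum.inl.injEq]
    exact if_congr ⟨fun ⟨_, hsr, _⟩ => ⟨hsr.symm, by omega⟩,
      fun ⟨hrs, _⟩ => ⟨by omega, hrs.symm, by omega⟩⟩ rfl rfl
  rw [lie_Hop_Kop, sum_congr rfl fun α hα => sum_congr rfl fun β _ => by
    rw [hBC α hα β, hAE α hα β]]
  simp only [mul_ite, ite_mul, mul_one, mul_zero, zero_mul, sum_add_distrib, sum_ite_irrel,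
    sum_const_zero]
  rw [sum_comm (γ := ℕ) (f := fun α β => if β + l = α then _ else _)]
  have hF : Fop d p m D ξ r s (k + l) = -∑ β ∈ range (ξ - l), ∑ α ∈ range (ξ - k),
      if β + l = α then derAt d (D + α + k) (Sum.inl r) * mulAt d (D + β) (Sum.inl s) else 0 := by
    rw [Fop_eq_sum, sum_range_sum_range_ite_add]
    simp only [add_assoc, add_comm l k]
  have hG : Gop d p m D ξ i j (k + l) = ∑ α ∈ range (ξ - k), ∑ β ∈ range (ξ - l),
      if α + k = β then mulAt d (D + β + l) (Sum.inr i) * derAt d (D + α) (Sum.inr j) else 0 := by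
    rw [Gop_eq_sum, sum_range_sum_range_ite_add]
    simp only [add_assoc]
  rw [hF, hG]
  split_ifs <;> abel

theorem lie_Hop_Kop_of_disjoint (D' ξ' : ℕ) (hdisj : ∀ x < ξ, ∀ y < ξ', D + x ≠ D' + y)
    (r s : Fin p) (i j : Fin m) (k l : ℕ) :
    ⁅Hop d p m D ξ r j k, Kop d p m D' ξ' i s l⁆ = 0 := by
  rw [lie_Hop_Kop, neg_eq_zero]
  refine sum_eq_zero fun α hα => sum_eq_zero fun β hβ => ?_
  rw [mem_range] at hα hβ
  rw [lie_derAt_mulAt, lie_derAt_mulAt,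
    if_neg fun h => hdisj α (by omega) (β + l) (by omega) (by omega),
    if_neg fun h => hdisj (α + k) (by omega) β (by omega) (by omega)]
  simp

end Operators

theorem stmt11_general (p m : ℕ) (d' : ℕ)
    (ξ : Fin d' → ℕ) (d : ℕ) (hd : d = ∑ a, ξ a)
    (D : Fin d' → ℕ)
    (hD : ∀ a, D a = ∑ b ∈ Finset.univ.filter (fun b => b < a), ξ b)
    (a b : Fin d') (r s : Fin p) (i j : Fin m) (k l : ℕ) :
    Hop d p m (D a) (ξ a) r j k * Kop d p m (D b) (ξ b) i s l
      - Kop d p m (D b) (ξ b) i s l * Hop d p m (D a) (ξ a) r j k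
    = if a = b then
        (if i = j then Fop d p m (D a) (ξ a) r s (k + l) else 0)
          - (if r = s then Gop d p m (D a) (ξ a) i j (k + l) else 0)
      else 0 := by
  rw [← Ring.lie_def]
  rcases eq_or_ne a b with rfl | hab
  · rw [if_pos rfl]
    refine lie_Hop_Kop_self _ _ ?_ r s i j k l
    rw [hd, hD a]
    exact sum_filter_lt_add_le_sum ξ a
  · rw [if_neg hab]
    refine lie_Hop_Kop_of_disjoint _ _ _ _ (fun x hx y hy => ?_) r s i j k l
    rw [hD a, hD b]
    exact sum_filter_lt_add_ne ξ hab hx hy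

/-- Identity (ovphi-e2):
`⁅H_a(r,j;k), K_b(i,s;l)⁆ = δ_{ab} (δ_{ij} F_a(r,s;k+l) - δ_{rs} G_a(i,j;k+l))`. -/
theorem stmt11 (p m : ℕ) (hpm : 1 ≤ p + m) (d' : ℕ) (hd' : 1 ≤ d')
    (ξ : Fin d' → ℕ) (hξ : ∀ a, 0 < ξ a) (d : ℕ) (hd : d = ∑ a, ξ a)
    (D : Fin d' → ℕ)
    (hD : ∀ a, D a = ∑ b ∈ Finset.univ.filter (fun b => b < a), ξ b)
    (a b : Fin d') (r s : Fin p) (i j : Fin m) (k l : ℕ) :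
    Hop d p m (D a) (ξ a) r j k * Kop d p m (D b) (ξ b) i s l
      - Kop d p m (D b) (ξ b) i s l * Hop d p m (D a) (ξ a) r j k
    = if a = b then
        (if i = j then Fop d p m (D a) (ξ a) r s (k + l) else 0)
          - (if r = s then Gop d p m (D a) (ξ a) i j (k + l) else 0)
      else 0 :=
  stmt11_general p m d' ξ d hd D hD a b r s i j k l
end

section
/- Define the d×d matrix L over K by L_{α,β} = δ_{α,β}·W − J_ξ(w)_{α,β} + Σ_{i=1}^{p'} Σ_{k=0}^{γ_i−1} (Z−z_i)^{−k−1} · Σ_{r=l_i+1}^{l_{i+1}−k} y^β_r p_{y^α_{r+k}} − Σ_{i=p'+1}^{ℓ} Σ_{k=0}^{γ_i−1} (Z−z_i)^{−k−1} · Σ_{r=l_i+1−p}^{l_{i+1}−k−p} p_{x^β_r} x^α_{r+k}, and define the (p+m)×(p+m) matrix L' over K by L'_{u,v} = δ_{u,v}·Z − J_γ(z)_{u,v} − Σ_{a=1}^{d'} Σ_{k=0}^{ξ_a−1} (W−w_a)^{−k−1} · C^{(a,k)}_{u,v}, where for 1 ≤ r,s ≤ p and 1 ≤ i,j ≤ m: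 C^{(a,k)}_{r,s} = −Σ_{α=d_a+1}^{d_{a+1}−k} p_{y^{α+k}_r} y^α_s; C^{(a,k)}_{r,p+j} = Σ_{α=d_a+1}^{d_{a+1}−k} p_{y^{α+k}_r} p_{x^α_j}; C^{(a,k)}_{p+i,s} = −Σ_{α=d_a+1}^{d_{a+1}−k} x^{α+k}_i y^α_s; C^{(a,k)}_{p+i,p+j} = Σ_{α=d_a+1}^{d_{a+1}−k} x^{α+k}_i p_{x^α_j}. Then the following determinant identity holds in K: Π_{i=1}^{ℓ} (Z−z_i)^{γ_i} · det(L) = Π_{a=1}^{d'} (W−w_a)^{ξ_a} · det(L'). (This is the q = n = 0 case of Theorem 5.4 of the paper, the duality of (gl_d, gl_{p+m}) for classical Gaudin models with irregular singularities; the case p = 0 recovers Vicedo–Young's classical (gl_d, gl_m) duality.) -/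
open MvPolynomial

set_option maxHeartbeats 1600000

/-- The index type of the `2 + 2d(p+m)` commuting indeterminates
`Z, W, y^α_r, p_{y^α_r}, x^α_i, p_{x^α_i}` (`1 ≤ α ≤ d`, `1 ≤ r ≤ p`, `1 ≤ i ≤ m`). -/
abbrev GIdx (d p m : ℕ) : Type :=
  (Unit ⊕ Unit) ⊕ ((Fin d × Fin p) ⊕ (Fin d × Fin p)) ⊕ ((Fin d × Fin m) ⊕ (Fin d × Fin m))

/-- The field of fractions of the polynomial ring over `ℂ` in the indeterminates
`Z, W, y, p_y, x, p_x`. -/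
abbrev GK (d p m : ℕ) : Type := FractionRing (MvPolynomial (GIdx d p m) ℂ)

/-- The canonical image of a polynomial in the fraction field. -/
noncomputable def toGK {d p m : ℕ} (q : MvPolynomial (GIdx d p m) ℂ) : GK d p m :=
  algebraMap (MvPolynomial (GIdx d p m) ℂ) (GK d p m) q

/-- The indeterminate `Z`. -/
noncomputable def Zv (d p m : ℕ) : GK d p m := toGK (X (Sum.inl (Sum.inl ())))

/-- The indeterminate `W`. -/
noncomputable def Wv (d p m : ℕ) : GK d p m := toGK (X (Sum.inl (Sum.inr ())))

/-- The constant `c ∈ ℂ`, viewed in the fraction field. -/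
noncomputable def cK (d p m : ℕ) (c : ℂ) : GK d p m := toGK (C c)

/-- The indeterminate `y^α_r` (both indices written 0-based as natural numbers;
out-of-range indices, which never occur under the hypotheses, give `0`). -/
noncomputable def yv (d p m : ℕ) (α r : ℕ) : GK d p m :=
  if h : α < d ∧ r < p then toGK (X (Sum.inr (Sum.inl (Sum.inl (⟨α, h.1⟩, ⟨r, h.2⟩)))))
  else 0

/-- The indeterminate `p_{y^α_r}`. -/
noncomputable def pyv (d p m : ℕ) (α r : ℕ) : GK d p m :=
  if h : α < d ∧ r < p then toGK (X (Sum.inr (Sum.inl (Sum.inr (⟨α, h.1⟩, ⟨r, h.2⟩)))))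
  else 0

/-- The indeterminate `x^α_i`. -/
noncomputable def xv (d p m : ℕ) (α i : ℕ) : GK d p m :=
  if h : α < d ∧ i < m then toGK (X (Sum.inr (Sum.inr (Sum.inl (⟨α, h.1⟩, ⟨i, h.2⟩)))))
  else 0

/-- The indeterminate `p_{x^α_i}`. -/
noncomputable def pxv (d p m : ℕ) (α i : ℕ) : GK d p m :=
  if h : α < d ∧ i < m then toGK (X (Sum.inr (Sum.inr (Sum.inr (⟨α, h.1⟩, ⟨i, h.2⟩)))))
  else 0

/-- The `N × N` block-diagonal Jordan matrix with `B` blocks: the `a`-th block has size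
`sz a`, starts at row `Dp a` (0-based; `Dp a = sz 0 + ⋯ + sz (a-1)`), has `ev a` on its
diagonal and `1` on its superdiagonal. -/
noncomputable def jordanBlocks {K : Type*} [CommRing K] (N B : ℕ) (sz Dp : Fin B → ℕ)
    (ev : Fin B → K) : Matrix (Fin N) (Fin N) K :=
  fun α β => ∑ a : Fin B,
    ((if Dp a ≤ (α : ℕ) ∧ (α : ℕ) < Dp a + sz a ∧ (α : ℕ) = (β : ℕ) then ev a else 0) +
     (if Dp a ≤ (α : ℕ) ∧ (α : ℕ) + 1 < Dp a + sz a ∧ (β : ℕ) = (α : ℕ) + 1 then 1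
      else 0))

/-- The `d × d` matrix `L` of the classical Gaudin model for `gl_d`:
`L_{α,β} = δ_{α,β} W - J_ξ(w)_{α,β}
  + Σ_{i=1}^{p'} Σ_{k=0}^{γ_i-1} (Z - z_i)^{-k-1} Σ_{r=l_i+1}^{l_{i+1}-k} y^β_r p_{y^α_{r+k}}
  - Σ_{i=p'+1}^{ℓ} Σ_{k=0}^{γ_i-1} (Z - z_i)^{-k-1}
      Σ_{r=l_i+1-p}^{l_{i+1}-k-p} p_{x^β_r} x^α_{r+k}`
(all variable indices written 0-based). -/
noncomputable def Lgld (d p m d' p' m' : ℕ) (ξ Dp : Fin d' → ℕ)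
    (γ lp : Fin (p' + m') → ℕ) (w : Fin d' → ℂ) (z : Fin (p' + m') → ℂ) :
    Matrix (Fin d) (Fin d) (GK d p m) :=
  fun α β =>
    (if α = β then Wv d p m else 0)
    - jordanBlocks d d' ξ Dp (fun a => cK d p m (w a)) α β
    + ∑ i ∈ Finset.univ.filter (fun i : Fin (p' + m') => (i : ℕ) < p'),
        ∑ k ∈ Finset.range (γ i),
          ((Zv d p m - cK d p m (z i))⁻¹) ^ (k + 1) *
            ∑ r ∈ Finset.range (γ i - k),
              yv d p m (β : ℕ) (lp i + r) * pyv d p m (α : ℕ) (lp i + r + k)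
    - ∑ i ∈ Finset.univ.filter (fun i : Fin (p' + m') => p' ≤ (i : ℕ)),
        ∑ k ∈ Finset.range (γ i),
          ((Zv d p m - cK d p m (z i))⁻¹) ^ (k + 1) *
            ∑ r ∈ Finset.range (γ i - k),
              pxv d p m (β : ℕ) (lp i + r - p) * xv d p m (α : ℕ) (lp i + r + k - p)

/-- The `(p+m) × (p+m)` matrix `C^{(a,k)}`:
for `1 ≤ r, s ≤ p` and `1 ≤ i, j ≤ m`,
`C^{(a,k)}_{r,s} = -Σ_{α=d_a+1}^{d_{a+1}-k} p_{y^{α+k}_r} y^α_s`,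
`C^{(a,k)}_{r,p+j} = Σ p_{y^{α+k}_r} p_{x^α_j}`,
`C^{(a,k)}_{p+i,s} = -Σ x^{α+k}_i y^α_s`,
`C^{(a,k)}_{p+i,p+j} = Σ x^{α+k}_i p_{x^α_j}`. -/
noncomputable def Cgls (d p m d' : ℕ) (ξ Dp : Fin d' → ℕ) (a : Fin d') (k : ℕ) :
    Matrix (Fin (p + m)) (Fin (p + m)) (GK d p m) :=
  fun u v =>
    if (u : ℕ) < p then
      if (v : ℕ) < p then
        - ∑ α ∈ Finset.range (ξ a - k),
            pyv d p m (Dp a + α + k) (u : ℕ) * yv d p m (Dp a + α) (v : ℕ)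
      else
        ∑ α ∈ Finset.range (ξ a - k),
            pyv d p m (Dp a + α + k) (u : ℕ) * pxv d p m (Dp a + α) ((v : ℕ) - p)
    else
      if (v : ℕ) < p then
        - ∑ α ∈ Finset.range (ξ a - k),
            xv d p m (Dp a + α + k) ((u : ℕ) - p) * yv d p m (Dp a + α) (v : ℕ)
      else
        ∑ α ∈ Finset.range (ξ a - k),
            xv d p m (Dp a + α + k) ((u : ℕ) - p) * pxv d p m (Dp a + α) ((v : ℕ) - p)

/-- The `(p+m) × (p+m)` matrix `L'` of the classical Gaudin model for `gl_{p+m}`: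
`L'_{u,v} = δ_{u,v} Z - J_γ(z)_{u,v}
  - Σ_{a=1}^{d'} Σ_{k=0}^{ξ_a-1} (W - w_a)^{-k-1} C^{(a,k)}_{u,v}`. -/
noncomputable def Lgls (d p m d' p' m' : ℕ) (ξ Dp : Fin d' → ℕ)
    (γ lp : Fin (p' + m') → ℕ) (w : Fin d' → ℂ) (z : Fin (p' + m') → ℂ) :
    Matrix (Fin (p + m)) (Fin (p + m)) (GK d p m) :=
  fun u v =>
    (if u = v then Zv d p m else 0)
    - jordanBlocks (p + m) (p' + m') γ lp (fun i => cK d p m (z i)) u v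
    - ∑ a : Fin d', ∑ k ∈ Finset.range (ξ a),
        ((Wv d p m - cK d p m (w a))⁻¹) ^ (k + 1) * Cgls d p m d' ξ Dp a k u v

open Finset

section NatAux
variable {M : Type*} [AddCommMonoid M] {Mm : Type*} [CommMonoid Mm]

lemma nat_partition_sum (g : ℕ → ℕ) (f : ℕ → M) (B : ℕ) :
    ∑ v ∈ range (∑ b ∈ range B, g b), f v
      = ∑ a ∈ range B, ∑ k ∈ range (g a), f ((∑ b ∈ range a, g b) + k) := by
  induction B with
  | zero => simp
  | succ n ih => rw [sum_range_succ, Finset.sum_range_add, ih, sum_range_succ]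

lemma nat_partition_prod (g : ℕ → ℕ) (f : ℕ → Mm) (B : ℕ) :
    ∏ v ∈ range (∑ b ∈ range B, g b), f v
      = ∏ a ∈ range B, ∏ k ∈ range (g a), f ((∑ b ∈ range a, g b) + k) := by
  induction B with
  | zero => simp
  | succ n ih => rw [sum_range_succ, Finset.prod_range_add, ih, prod_range_succ]

lemma nat_cover (g : ℕ → ℕ) (B v : ℕ) (hv : v < ∑ b ∈ range B, g b) :
    ∃ a < B, (∑ b ∈ range a, g b) ≤ v ∧ v < (∑ b ∈ range a, g b) + g a := by
  induction B with
  | zero => simp at hv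
  | succ n ih =>
    rw [sum_range_succ] at hv
    by_cases h : v < ∑ b ∈ range n, g b
    · obtain ⟨a, ha, h1, h2⟩ := ih h
      exact ⟨a, by omega, h1, h2⟩
    · exact ⟨n, by omega, by omega, by omega⟩

lemma sum_range_if_le (c n : ℕ) (G : ℕ → M) :
    (∑ c' ∈ range n, if c ≤ c' then G c' else 0) = ∑ k ∈ range (n - c), G (c + k) := by
  rw [← Finset.sum_filter]
  have h : (range n).filter (fun x => c ≤ x) = Ico c n := by
    ext x; simp [mem_Ico, mem_range, mem_filter]; omega
  rw [h, Finset.sum_Ico_eq_sum_range]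

lemma sum_triangle (n : ℕ) (H : ℕ → ℕ → M) :
    ∑ c ∈ range n, ∑ k ∈ range (n - c), H c k
      = ∑ k ∈ range n, ∑ c ∈ range (n - k), H c k := by
  have key : ∀ (F : ℕ → ℕ → M), ∀ c, (∑ k ∈ range (n - c), F c k)
      = ∑ k ∈ range n, if c + k < n then F c k else 0 := by
    intro F c
    rw [← Finset.sum_filter]
    apply Finset.sum_congr
    · ext x; simp [mem_filter, mem_range]; omega
    · intros; rfl
  calc ∑ c ∈ range n, ∑ k ∈ range (n - c), H c k
      = ∑ c ∈ range n, ∑ k ∈ range n, if c + k < n then H c k else 0 :=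
        Finset.sum_congr rfl fun c _ => key H c
    _ = ∑ k ∈ range n, ∑ c ∈ range n, if c + k < n then H c k else 0 := Finset.sum_comm
    _ = ∑ k ∈ range n, ∑ c ∈ range (n - k), H c k := by
        refine Finset.sum_congr rfl fun k _ => ?_
        rw [key (fun k c => H c k) k]
        refine Finset.sum_congr rfl fun c _ => ?_
        rw [Nat.add_comm]

end NatAux

section BlockAux

variable {K : Type*} [Field K]

/-- entry function of `t·1 - J` as a function of natural indices -/
noncomputable def ANf (B : ℕ) (sz Dp : Fin B → ℕ) (t : K) (ev : Fin B → K) (x y : ℕ) : K :=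
  (if x = y then t else 0) -
    ∑ a : Fin B,
      ((if Dp a ≤ x ∧ x < Dp a + sz a ∧ x = y then ev a else 0) +
       (if Dp a ≤ x ∧ x + 1 < Dp a + sz a ∧ y = x + 1 then 1 else 0))

/-- entry function of the resolvent `(t·1 - J)⁻¹` -/
noncomputable def RNf (B : ℕ) (sz Dp : Fin B → ℕ) (t : K) (ev : Fin B → K) (x y : ℕ) : K :=
  ∑ a : Fin B, if Dp a ≤ x ∧ x ≤ y ∧ y < Dp a + sz a
    then ((t - ev a)⁻¹) ^ (y - x + 1) else 0

/-- totalized size function -/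
noncomputable def sznf (B : ℕ) (sz : Fin B → ℕ) (n : ℕ) : ℕ :=
  if h : n < B then sz ⟨n, h⟩ else 0

variable {B N : ℕ} {sz Dp : Fin B → ℕ}

lemma hord_of (hDp : ∀ a, Dp a = ∑ b ∈ univ.filter (· < a), sz b) :
    ∀ a b : Fin B, a < b → Dp a + sz a ≤ Dp b := by
  intro a b hab
  have hsub : insert a (univ.filter (· < a)) ⊆ univ.filter (· < b) := by
    intro c hc
    simp only [mem_insert, mem_filter, mem_univ, true_and] at *
    rcases hc with rfl | h
    · exact hab
    · exact lt_trans h hab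
  have hins : Dp a + sz a = ∑ c ∈ insert a (univ.filter (· < a)), sz c := by
    rw [Finset.sum_insert (by simp), hDp a, add_comm]
  rw [hins, hDp b]
  exact Finset.sum_le_sum_of_subset hsub

lemma blk_unique (hord : ∀ a b : Fin B, a < b → Dp a + sz a ≤ Dp b) {a b : Fin B} {n : ℕ}
    (ha : Dp a ≤ n ∧ n < Dp a + sz a) (hb : Dp b ≤ n ∧ n < Dp b + sz b) : a = b := by
  rcases lt_trichotomy a b with h | h | h
  · have := hord a b h; omega
  · exact h
  · have := hord b a h; omega

lemma szn_at (a : Fin B) : sznf B sz ↑a = sz a := by simp [sznf]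

lemma dpn_eq (hDp : ∀ a, Dp a = ∑ b ∈ univ.filter (· < a), sz b) (a : Fin B) :
    Dp a = ∑ b ∈ range (a : ℕ), sznf B sz b := by
  rw [hDp a, Finset.sum_filter]
  have h1 : ∀ b : Fin B, (if b < a then sz b else 0) =
      (fun n => if n < (a : ℕ) then sznf B sz n else 0) (b : ℕ) := by
    intro b
    simp only [Fin.lt_def, szn_at]
  calc ∑ b : Fin B, (if b < a then sz b else 0)
      = ∑ b : Fin B, (fun n => if n < (a : ℕ) then sznf B sz n else 0) (b : ℕ) :=
        Finset.sum_congr rfl fun b _ => h1 b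
    _ = ∑ n ∈ range B, if n < (a : ℕ) then sznf B sz n else 0 := by
        exact Fin.sum_univ_eq_sum_range (fun n => if n < (a : ℕ) then sznf B sz n else 0) B
    _ = ∑ n ∈ (range B).filter (· < (a : ℕ)), sznf B sz n := (Finset.sum_filter _ _).symm
    _ = ∑ n ∈ range (a : ℕ), sznf B sz n := by
        congr 1
        ext x
        simp only [mem_filter, mem_range]
        have := a.isLt
        omega

lemma szn_total (hsum : ∑ a, sz a = N) : ∑ b ∈ range B, sznf B sz b = N := by
  rw [← hsum, ← Fin.sum_univ_eq_sum_range (sznf B sz) B]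
  exact Finset.sum_congr rfl fun a _ => szn_at a

lemma blk_cover (hDp : ∀ a, Dp a = ∑ b ∈ univ.filter (· < a), sz b)
    (hsum : ∑ a, sz a = N) :
    ∀ n < N, ∃ a : Fin B, Dp a ≤ n ∧ n < Dp a + sz a := by
  intro n hn
  obtain ⟨a, haB, h1, h2⟩ := nat_cover (sznf B sz) B n (by rwa [szn_total hsum])
  have hd : Dp ⟨a, haB⟩ = ∑ b ∈ range a, sznf B sz b := dpn_eq hDp ⟨a, haB⟩
  have hs : sz ⟨a, haB⟩ = sznf B sz a := (szn_at ⟨a, haB⟩).symm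
  exact ⟨⟨a, haB⟩, by omega, by omega⟩

lemma blk_end_le (hDp : ∀ a, Dp a = ∑ b ∈ univ.filter (· < a), sz b)
    (hsum : ∑ a, sz a = N) (a : Fin B) : Dp a + sz a ≤ N := by
  have h1 := Finset.sum_filter_add_sum_filter_not univ (· < a) sz
  have h2 : sz a ≤ ∑ b ∈ univ.filter (fun b => ¬ b < a), sz b :=
    Finset.single_le_sum (f := sz) (fun i _ => Nat.zero_le _) (by simp)
  rw [hsum] at h1
  rw [hDp a]
  omega

end BlockAux
section PointAux
open Finset
variable {K : Type*} [Field K] {B N : ℕ} {sz Dp : Fin B → ℕ} {t : K} {ev : Fin B → K}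

lemma RNf_eq (hord : ∀ a b : Fin B, a < b → Dp a + sz a ≤ Dp b) {a : Fin B} {x : ℕ}
    (hx : Dp a ≤ x ∧ x < Dp a + sz a) (y : ℕ) :
    RNf B sz Dp t ev x y
      = if x ≤ y ∧ y < Dp a + sz a then ((t - ev a)⁻¹) ^ (y - x + 1) else 0 := by
  unfold RNf
  rw [Finset.sum_eq_single a]
  · exact if_congr ⟨fun h => ⟨h.2.1, h.2.2⟩, fun h => ⟨hx.1, h.1, h.2⟩⟩ rfl rfl
  · intro b _ hb
    rw [if_neg]
    rintro ⟨h1, h2, h3⟩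
    exact hb (blk_unique hord ⟨h1, by omega⟩ hx)
  · intro h; exact absurd (Finset.mem_univ a) h

lemma ANf_diag (hord : ∀ a b : Fin B, a < b → Dp a + sz a ≤ Dp b) {a : Fin B} {x : ℕ}
    (hx : Dp a ≤ x ∧ x < Dp a + sz a) :
    ANf B sz Dp t ev x x = t - ev a := by
  unfold ANf
  rw [if_pos rfl]
  congr 1
  rw [Finset.sum_eq_single a]
  · rw [if_pos ⟨hx.1, hx.2, rfl⟩, if_neg (by omega), add_zero]
  · intro b _ hb
    rw [if_neg, if_neg, add_zero]
    · omega
    · rintro ⟨h1, h2, h3⟩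
      exact hb (blk_unique hord ⟨h1, h2⟩ hx)
  · intro h; exact absurd (Finset.mem_univ a) h

lemma ANf_super (hord : ∀ a b : Fin B, a < b → Dp a + sz a ≤ Dp b) {a : Fin B} {x : ℕ}
    (hx : Dp a ≤ x ∧ x < Dp a + sz a) :
    ANf B sz Dp t ev x (x + 1) = -(if x + 1 < Dp a + sz a then (1 : K) else 0) := by
  unfold ANf
  rw [if_neg (by omega), zero_sub]
  congr 1
  rw [Finset.sum_eq_single a]
  · rw [if_neg (by omega), zero_add]
    exact if_congr ⟨fun h => h.2.1, fun h => ⟨hx.1, h, rfl⟩⟩ rfl rfl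
  · intro b _ hb
    rw [if_neg (by omega), if_neg, add_zero]
    rintro ⟨h1, h2, h3⟩
    exact hb (blk_unique hord ⟨h1, by omega⟩ hx)
  · intro h; exact absurd (Finset.mem_univ a) h

lemma ANf_off {x y : ℕ} (h1 : y ≠ x) (h2 : y ≠ x + 1) :
    ANf B sz Dp t ev x y = (0 : K) := by
  unfold ANf
  rw [if_neg (by omega), zero_sub, neg_eq_zero]
  exact Finset.sum_eq_zero fun b _ => by rw [if_neg (by omega), if_neg (by omega), add_zero]

end PointAux
section MulAux
open Finset
variable {K : Type*} [Field K] {B N : ℕ} {sz Dp : Fin B → ℕ} {t : K} {ev : Fin B → K}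

lemma core_calc (u v : K) (huv : v * u = 1) (x y E : ℕ) (hxE : x < E) :
    v * (if x ≤ y ∧ y < E then u ^ (y - x + 1) else 0)
      + (-(if x + 1 < E then (1:K) else 0)) * (if x + 1 ≤ y ∧ y < E then u ^ (y - (x+1) + 1) else 0)
      = if x = y then 1 else 0 := by
  by_cases hxy : x = y
  · subst hxy
    rw [if_pos ⟨le_refl x, hxE⟩, if_neg (show ¬(x + 1 ≤ x ∧ x < E) by omega), mul_zero,
      add_zero, if_pos rfl, Nat.sub_self, zero_add, pow_one]
    exact huv
  · rw [if_neg hxy]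
    by_cases hle : x + 1 ≤ y
    · by_cases hyE : y < E
      · rw [if_pos ⟨by omega, hyE⟩, if_pos (by omega), if_pos ⟨hle, hyE⟩]
        have h1 : y - x + 1 = (y - (x+1) + 1) + 1 := by omega
        have h2 : v * (u ^ (y - (x+1) + 1) * u) = u ^ (y - (x+1) + 1) := by
          rw [mul_comm (u ^ _) u, ← mul_assoc, huv, one_mul]
        rw [h1, pow_succ, h2]
        ring
      · rw [if_neg (show ¬(x ≤ y ∧ y < E) by omega),
          if_neg (show ¬(x + 1 ≤ y ∧ y < E) by omega), mul_zero, mul_zero, add_zero]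
    · rw [if_neg (show ¬(x ≤ y ∧ y < E) by omega),
        if_neg (show ¬(x + 1 ≤ y ∧ y < E) by omega), mul_zero, mul_zero, add_zero]

lemma AN_mul_RN (hDp : ∀ a, Dp a = ∑ b ∈ univ.filter (· < a), sz b)
    (hsum : ∑ a, sz a = N) (hne : ∀ a, t - ev a ≠ 0) :
    (Matrix.of fun α β : Fin N => ANf B sz Dp t ev ↑α ↑β) *
      (Matrix.of fun α β : Fin N => RNf B sz Dp t ev ↑α ↑β) = 1 := by
  have hord := hord_of hDp
  ext α β
  rw [Matrix.mul_apply]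
  obtain ⟨a, ha⟩ := blk_cover hDp hsum ↑α α.isLt
  have hend : Dp a + sz a ≤ N := blk_end_le hDp hsum a
  simp only [Matrix.of_apply]
  have hone : (1 : Matrix (Fin N) (Fin N) K) α β = if (α:ℕ) = (β:ℕ) then 1 else 0 := by
    simp [Matrix.one_apply, Fin.val_inj]
  rw [hone]
  have hRα : RNf B sz Dp t ev ↑α ↑β
      = if (α:ℕ) ≤ ↑β ∧ (β:ℕ) < Dp a + sz a then ((t - ev a)⁻¹) ^ ((β:ℕ) - ↑α + 1) else 0 :=
    RNf_eq hord ha ↑β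
  have hAd : ANf B sz Dp t ev ↑α ↑α = t - ev a := ANf_diag hord ha
  have huv : (t - ev a) * (t - ev a)⁻¹ = 1 := mul_inv_cancel₀ (hne a)
  by_cases hs : (α:ℕ) + 1 < N
  · set α' : Fin N := ⟨(α:ℕ) + 1, hs⟩ with hα'
    have hvα' : (α' : ℕ) = (α:ℕ) + 1 := rfl
    have hsub : ∑ γ : Fin N, ANf B sz Dp t ev ↑α ↑γ * RNf B sz Dp t ev ↑γ ↑β
        = ∑ γ ∈ ({α, α'} : Finset (Fin N)), ANf B sz Dp t ev ↑α ↑γ * RNf B sz Dp t ev ↑γ ↑β := by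
      refine (Finset.sum_subset (Finset.subset_univ _) ?_).symm
      intro γ _ hγ
      simp only [Finset.mem_insert, Finset.mem_singleton] at hγ
      push_neg at hγ
      have h1 : (γ:ℕ) ≠ (α:ℕ) := fun h => hγ.1 (Fin.val_inj.mp h)
      have h2 : (γ:ℕ) ≠ (α:ℕ) + 1 := fun h => hγ.2 (Fin.val_inj.mp (h.trans hvα'.symm))
      rw [ANf_off h1 h2, zero_mul]
    have hne' : α ≠ α' := by
      intro h
      have := congrArg Fin.val h
      rw [hvα'] at this
      omega
    have hASup : ANf B sz Dp t ev ↑α ((α:ℕ)+1)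
        = -(if (α:ℕ)+1 < Dp a + sz a then (1:K) else 0) := ANf_super hord ha
    rw [hsub, Finset.sum_pair hne', hAd, hRα]
    show _ + ANf B sz Dp t ev ↑α ((α:ℕ)+1) * RNf B sz Dp t ev ((α:ℕ)+1) ↑β = _
    rw [hASup]
    by_cases hE : (α:ℕ) + 1 < Dp a + sz a
    · have hR' : RNf B sz Dp t ev ((α:ℕ)+1) ↑β
          = if (α:ℕ)+1 ≤ ↑β ∧ (β:ℕ) < Dp a + sz a
            then ((t - ev a)⁻¹) ^ ((β:ℕ) - ((α:ℕ)+1) + 1) else 0 :=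
        RNf_eq hord ⟨by omega, hE⟩ ↑β
      rw [hR']
      exact core_calc _ _ huv _ _ _ ha.2
    · rw [if_neg hE, neg_zero, zero_mul, add_zero]
      by_cases hxy : (α:ℕ) = (β:ℕ)
      · rw [if_pos ⟨by omega, by omega⟩, if_pos hxy]
        have : (β:ℕ) - (α:ℕ) + 1 = 1 := by omega
        rw [this, pow_one, huv]
      · rw [if_neg (by omega), mul_zero, if_neg hxy]
  · have hsub : ∑ γ : Fin N, ANf B sz Dp t ev ↑α ↑γ * RNf B sz Dp t ev ↑γ ↑β
        = ANf B sz Dp t ev ↑α ↑α * RNf B sz Dp t ev ↑α ↑β := by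
      refine Finset.sum_eq_single α ?_ ?_
      · intro γ _ hγ
        have h1 : (γ:ℕ) ≠ (α:ℕ) := fun h => hγ (Fin.val_inj.mp h)
        have h2 : (γ:ℕ) ≠ (α:ℕ) + 1 := by have := γ.isLt; omega
        rw [ANf_off h1 h2, zero_mul]
      · intro h; exact absurd (Finset.mem_univ α) h
    rw [hsub, hAd, hRα]
    by_cases hxy : (α:ℕ) = (β:ℕ)
    · rw [if_pos ⟨by omega, by omega⟩, if_pos hxy]
      have : (β:ℕ) - (α:ℕ) + 1 = 1 := by omega
      rw [this, pow_one, huv]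
    · rw [if_neg (by omega), mul_zero, if_neg hxy]

end MulAux
section DetAux
open Finset
variable {K : Type*} [Field K] {B N : ℕ} {sz Dp : Fin B → ℕ} {t : K} {ev : Fin B → K}

lemma det_AN (hDp : ∀ a, Dp a = ∑ b ∈ univ.filter (· < a), sz b)
    (hsum : ∑ a, sz a = N) :
    (Matrix.of fun α β : Fin N => ANf B sz Dp t ev ↑α ↑β).det
      = ∏ a : Fin B, (t - ev a) ^ (sz a) := by
  have hord := hord_of hDp
  rw [Matrix.det_of_upperTriangular (by
    intro i j hij
    have h : (j:ℕ) < (i:ℕ) := hij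
    exact ANf_off (by omega) (by omega))]
  calc ∏ i : Fin N, (Matrix.of fun α β : Fin N => ANf B sz Dp t ev ↑α ↑β) i i
      = ∏ n ∈ range N, ANf B sz Dp t ev n n :=
        Fin.prod_univ_eq_prod_range (fun n => ANf B sz Dp t ev n n) N
    _ = ∏ a ∈ range B, ∏ k ∈ range (sznf B sz a),
          ANf B sz Dp t ev ((∑ b ∈ range a, sznf B sz b) + k)
            ((∑ b ∈ range a, sznf B sz b) + k) := by
        conv_lhs => rw [← szn_total (sz := sz) hsum]
        exact nat_partition_prod _ _ B
    _ = ∏ a : Fin B, (t - ev a) ^ sz a := by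
        rw [← Fin.prod_univ_eq_prod_range (fun a => ∏ k ∈ range (sznf B sz a),
          ANf B sz Dp t ev ((∑ b ∈ range a, sznf B sz b) + k)
            ((∑ b ∈ range a, sznf B sz b) + k)) B]
        refine Finset.prod_congr rfl fun a _ => ?_
        have h1 : sznf B sz ↑a = sz a := szn_at a
        have h2 : (∑ b ∈ range (a:ℕ), sznf B sz b) = Dp a := (dpn_eq hDp a).symm
        rw [h1, h2]
        have h3 : ∀ k ∈ range (sz a),
            ANf B sz Dp t ev (Dp a + k) (Dp a + k) = t - ev a := fun k hk =>
          ANf_diag hord ⟨Nat.le_add_right _ _, by have := mem_range.mp hk; omega⟩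
        rw [Finset.prod_congr rfl h3, Finset.prod_const, card_range]

lemma RN_pairing (hDp : ∀ a, Dp a = ∑ b ∈ univ.filter (· < a), sz b)
    (hsum : ∑ a, sz a = N) (F : ℕ → ℕ → K) :
    ∑ x : Fin N, ∑ y : Fin N, RNf B sz Dp t ev ↑x ↑y * F ↑x ↑y
      = ∑ a : Fin B, ∑ k ∈ range (sz a), ((t - ev a)⁻¹) ^ (k+1) *
          ∑ r ∈ range (sz a - k), F (Dp a + r) (Dp a + r + k) := by
  have hord := hord_of hDp
  set g := sznf B sz with hg
  set dp : ℕ → ℕ := fun a => ∑ b ∈ range a, g b with hdp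
  set evn : ℕ → K := fun n => if h : n < B then ev ⟨n,h⟩ else 0 with hevn
  have collapse : ∀ a ∈ range B, ∀ c ∈ range (g a),
      (∑ a' ∈ range B, ∑ c' ∈ range (g a'),
        RNf B sz Dp t ev (dp a + c) (dp a' + c') * F (dp a + c) (dp a' + c'))
      = ∑ k ∈ range (g a - c), ((t - evn a)⁻¹)^(k+1) * F (dp a + c) (dp a + c + k) := by
    intro a ha c hc
    have haB : a < B := mem_range.mp ha
    have hcga : c < g a := mem_range.mp hc
    set af : Fin B := ⟨a, haB⟩ with haf
    have hdpa : Dp af = dp a := dpn_eq hDp af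
    have hsza : sz af = g a := (szn_at af).symm
    have hx : Dp af ≤ dp a + c ∧ dp a + c < Dp af + sz af := ⟨by omega, by omega⟩
    have hEv : evn a = ev af := dif_pos haB
    rw [Finset.sum_eq_single a]
    · calc ∑ c' ∈ range (g a),
            RNf B sz Dp t ev (dp a + c) (dp a + c') * F (dp a + c) (dp a + c')
          = ∑ c' ∈ range (g a), (if c ≤ c'
              then ((t - evn a)⁻¹)^(c' - c + 1) * F (dp a + c) (dp a + c') else 0) := by
            refine Finset.sum_congr rfl fun c' hc' => ?_
            have hc'g : c' < g a := mem_range.mp hc'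
            rw [RNf_eq hord hx]
            by_cases hcc : c ≤ c'
            · rw [if_pos ⟨by omega, by omega⟩, if_pos hcc]
              have he : (dp a + c') - (dp a + c) + 1 = c' - c + 1 := by omega
              rw [he, hEv]
            · rw [if_neg (by omega), if_neg hcc, zero_mul]
        _ = ∑ k ∈ range (g a - c),
              ((t - evn a)⁻¹)^((c+k) - c + 1) * F (dp a + c) (dp a + (c + k)) :=
            sum_range_if_le c (g a) _
        _ = ∑ k ∈ range (g a - c),
              ((t - evn a)⁻¹)^(k+1) * F (dp a + c) (dp a + c + k) := by
            refine Finset.sum_congr rfl fun k _ => ?_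
            have h1 : (c+k) - c + 1 = k + 1 := by omega
            have h2 : dp a + (c + k) = dp a + c + k := by omega
            rw [h1, h2]
    · intro a' ha' hne
      refine Finset.sum_eq_zero fun c' hc' => ?_
      have ha'B : a' < B := mem_range.mp ha'
      have hc'g : c' < g a' := mem_range.mp hc'
      set af' : Fin B := ⟨a', ha'B⟩ with haf'
      have hdpa' : Dp af' = dp a' := dpn_eq hDp af'
      have hsza' : sz af' = g a' := (szn_at af').symm
      rw [RNf_eq hord hx, if_neg, zero_mul]
      rintro ⟨h1, h2⟩
      have heq : af = af' := blk_unique hord ⟨by omega, h2⟩ ⟨by omega, by omega⟩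
      exact hne (congrArg Fin.val heq).symm
    · intro h; exact absurd ha h
  calc ∑ x : Fin N, ∑ y : Fin N, RNf B sz Dp t ev ↑x ↑y * F ↑x ↑y
      = ∑ n ∈ range N, ∑ mm ∈ range N, RNf B sz Dp t ev n mm * F n mm := by
        rw [Fin.sum_univ_eq_sum_range
          (fun n => ∑ y : Fin N, RNf B sz Dp t ev n ↑y * F n ↑y) N]
        exact Finset.sum_congr rfl fun n _ =>
          Fin.sum_univ_eq_sum_range (fun mm => RNf B sz Dp t ev n mm * F n mm) N
    _ = ∑ a ∈ range B, ∑ c ∈ range (g a), ∑ a' ∈ range B, ∑ c' ∈ range (g a'),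
          RNf B sz Dp t ev (dp a + c) (dp a' + c') * F (dp a + c) (dp a' + c') := by
        conv_lhs => rw [← szn_total (sz := sz) hsum]
        rw [nat_partition_sum (sznf B sz)
          (fun n => ∑ mm ∈ range (∑ b ∈ range B, sznf B sz b),
            RNf B sz Dp t ev n mm * F n mm) B]
        refine Finset.sum_congr rfl fun a _ => Finset.sum_congr rfl fun c _ => ?_
        exact nat_partition_sum (sznf B sz)
          (fun mm => RNf B sz Dp t ev (dp a + c) mm * F (dp a + c) mm) B
    _ = ∑ a ∈ range B, ∑ c ∈ range (g a), ∑ k ∈ range (g a - c),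
          ((t - evn a)⁻¹)^(k+1) * F (dp a + c) (dp a + c + k) :=
        Finset.sum_congr rfl fun a ha => Finset.sum_congr rfl fun c hc => collapse a ha c hc
    _ = ∑ a ∈ range B, ∑ k ∈ range (g a), ∑ c ∈ range (g a - k),
          ((t - evn a)⁻¹)^(k+1) * F (dp a + c) (dp a + c + k) :=
        Finset.sum_congr rfl fun a _ => sum_triangle (g a) _
    _ = ∑ a ∈ range B, ∑ k ∈ range (g a), ((t - evn a)⁻¹)^(k+1) *
          ∑ r ∈ range (g a - k), F (dp a + r) (dp a + r + k) :=
        Finset.sum_congr rfl fun a _ => Finset.sum_congr rfl fun k _ =>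
          (Finset.mul_sum _ _ _).symm
    _ = ∑ a : Fin B, ∑ k ∈ range (sz a), ((t - ev a)⁻¹) ^ (k+1) *
          ∑ r ∈ range (sz a - k), F (Dp a + r) (Dp a + r + k) := by
        rw [← Fin.sum_univ_eq_sum_range (fun a => ∑ k ∈ range (g a), ((t - evn a)⁻¹)^(k+1) *
          ∑ r ∈ range (g a - k), F (dp a + r) (dp a + r + k)) B]
        refine Finset.sum_congr rfl fun a _ => ?_
        have h1 : g ↑a = sz a := szn_at a
        have h2 : dp ↑a = Dp a := (dpn_eq hDp a).symm
        have h3 : evn ↑a = ev a := by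
          rw [hevn]; simp only [a.isLt, dif_pos]
        rw [h1, h2, h3]

end DetAux

section EntryAux
open Finset Matrix

lemma AN_entry {K : Type*} [Field K] {N B : ℕ} (sz Dp : Fin B → ℕ) (t : K) (ev : Fin B → K)
    (α β : Fin N) :
    (if α = β then t else 0) - jordanBlocks N B sz Dp ev α β = ANf B sz Dp t ev ↑α ↑β := by
  have h : (if α = β then t else 0) = (if (α:ℕ) = (β:ℕ) then t else 0) := by
    simp [Fin.val_inj]
  rw [h]; rfl

/-- The off-diagonal block `B` of the big matrix. -/
noncomputable def BmM (d p m : ℕ) : Matrix (Fin d) (Fin (p+m)) (GK d p m) :=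
  Matrix.of fun α u => if (u:ℕ) < p then pyv d p m ↑α ↑u else xv d p m ↑α (↑u - p)

/-- The off-diagonal block `C` of the big matrix. -/
noncomputable def CmM (d p m : ℕ) : Matrix (Fin (p+m)) (Fin d) (GK d p m) :=
  Matrix.of fun u β => if (u:ℕ) < p then -yv d p m ↑β ↑u else pxv d p m ↑β (↑u - p)

lemma schur_L (d p m d' p' m' : ℕ) (ξ Dp : Fin d' → ℕ) (γ lp : Fin (p' + m') → ℕ)
    (w : Fin d' → ℂ) (z : Fin (p' + m') → ℂ)
    (hlp : ∀ i, lp i = ∑ j ∈ Finset.univ.filter (fun j => j < i), γ j)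
    (hb1 : ∀ i : Fin (p' + m'), (i:ℕ) < p' → lp i + γ i ≤ p)
    (hb2 : ∀ i : Fin (p' + m'), p' ≤ (i:ℕ) → p ≤ lp i)
    (hγsum : ∑ i, γ i = p + m) :
    (Matrix.of fun α β : Fin d =>
        ANf d' ξ Dp (Wv d p m) (fun a => cK d p m (w a)) ↑α ↑β)
      - BmM d p m * (Matrix.of fun uu vv : Fin (p+m) =>
          RNf (p'+m') γ lp (Zv d p m) (fun i => cK d p m (z i)) ↑uu ↑vv)ᵀ * CmM d p m
      = Lgld d p m d' p' m' ξ Dp γ lp w z := by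
  ext α β
  have hstep1 : (BmM d p m * (Matrix.of fun uu vv : Fin (p+m) =>
      RNf (p'+m') γ lp (Zv d p m) (fun i => cK d p m (z i)) ↑uu ↑vv)ᵀ * CmM d p m) α β
      = ∑ u : Fin (p+m), ∑ v : Fin (p+m),
          RNf (p'+m') γ lp (Zv d p m) (fun i => cK d p m (z i)) ↑u ↑v *
          (fun n mm => (if n < p then -yv d p m ↑β n else pxv d p m ↑β (n - p)) *
            (if mm < p then pyv d p m ↑α mm else xv d p m ↑α (mm - p))) ↑u ↑v := by
    rw [Matrix.mul_apply]
    refine Finset.sum_congr rfl fun u _ => ?_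
    rw [Matrix.mul_apply, Finset.sum_mul]
    refine Finset.sum_congr rfl fun v _ => ?_
    simp only [Matrix.transpose_apply, Matrix.of_apply, BmM, CmM]
    ring
  have hpair := RN_pairing (N := p + m) (t := Zv d p m)
    (ev := fun i => cK d p m (z i)) hlp hγsum
    (fun n mm => (if n < p then -yv d p m ↑β n else pxv d p m ↑β (n - p)) *
      (if mm < p then pyv d p m ↑α mm else xv d p m ↑α (mm - p)))
  rw [Matrix.sub_apply, Matrix.of_apply, ← AN_entry, hstep1, hpair]
  simp only [Lgld]
  rw [← Finset.sum_filter_add_sum_filter_not Finset.univ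
    (fun i : Fin (p'+m') => (i:ℕ) < p')]
  have hfe : Finset.univ.filter (fun i : Fin (p'+m') => ¬ (i:ℕ) < p')
      = Finset.univ.filter (fun i : Fin (p'+m') => p' ≤ (i:ℕ)) := by
    ext i; simp [not_lt]
  rw [hfe]
  have e1 : ∀ i ∈ Finset.univ.filter (fun i : Fin (p'+m') => (i:ℕ) < p'),
      (∑ k ∈ Finset.range (γ i), ((Zv d p m - cK d p m (z i))⁻¹) ^ (k + 1) *
        ∑ r ∈ Finset.range (γ i - k),
          (if lp i + r < p then -yv d p m ↑β (lp i + r)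
            else pxv d p m ↑β (lp i + r - p)) *
          (if lp i + r + k < p then pyv d p m ↑α (lp i + r + k)
            else xv d p m ↑α (lp i + r + k - p)))
      = -(∑ k ∈ Finset.range (γ i), ((Zv d p m - cK d p m (z i))⁻¹) ^ (k + 1) *
          ∑ r ∈ Finset.range (γ i - k),
            yv d p m (β : ℕ) (lp i + r) * pyv d p m (α : ℕ) (lp i + r + k)) := by
    intro i hi
    have hip : (i:ℕ) < p' := (Finset.mem_filter.mp hi).2
    have hbd := hb1 i hip
    have h1 : ∀ k ∈ Finset.range (γ i),
        (((Zv d p m - cK d p m (z i))⁻¹) ^ (k + 1) *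
          ∑ r ∈ Finset.range (γ i - k),
            (if lp i + r < p then -yv d p m ↑β (lp i + r)
              else pxv d p m ↑β (lp i + r - p)) *
            (if lp i + r + k < p then pyv d p m ↑α (lp i + r + k)
              else xv d p m ↑α (lp i + r + k - p)))
        = ((Zv d p m - cK d p m (z i))⁻¹) ^ (k + 1) *
          ∑ r ∈ Finset.range (γ i - k),
            -(yv d p m (β : ℕ) (lp i + r) * pyv d p m (α : ℕ) (lp i + r + k)) := by
      intro k hk
      have hk' : k < γ i := Finset.mem_range.mp hk
      congr 1
      refine Finset.sum_congr rfl fun r hr => ?_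
      have hr' : r < γ i - k := Finset.mem_range.mp hr
      rw [if_pos (by omega), if_pos (by omega)]
      ring
    rw [Finset.sum_congr rfl h1, ← Finset.sum_neg_distrib]
    exact Finset.sum_congr rfl fun k _ => by rw [Finset.sum_neg_distrib]; ring
  have e2 : ∀ i ∈ Finset.univ.filter (fun i : Fin (p'+m') => p' ≤ (i:ℕ)),
      (∑ k ∈ Finset.range (γ i), ((Zv d p m - cK d p m (z i))⁻¹) ^ (k + 1) *
        ∑ r ∈ Finset.range (γ i - k),
          (if lp i + r < p then -yv d p m ↑β (lp i + r)
            else pxv d p m ↑β (lp i + r - p)) *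
          (if lp i + r + k < p then pyv d p m ↑α (lp i + r + k)
            else xv d p m ↑α (lp i + r + k - p)))
      = ∑ k ∈ Finset.range (γ i), ((Zv d p m - cK d p m (z i))⁻¹) ^ (k + 1) *
          ∑ r ∈ Finset.range (γ i - k),
            pxv d p m (β : ℕ) (lp i + r - p) * xv d p m (α : ℕ) (lp i + r + k - p) := by
    intro i hi
    have hip : p' ≤ (i:ℕ) := (Finset.mem_filter.mp hi).2
    have hbd := hb2 i hip
    refine Finset.sum_congr rfl fun k hk => ?_
    congr 1
    refine Finset.sum_congr rfl fun r hr => ?_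
    rw [if_neg (by omega), if_neg (by omega)]
  rw [Finset.sum_congr rfl e1, Finset.sum_congr rfl e2, Finset.sum_neg_distrib]
  ring

lemma schur_L' (d p m d' p' m' : ℕ) (ξ Dp : Fin d' → ℕ) (γ lp : Fin (p' + m') → ℕ)
    (w : Fin d' → ℂ) (z : Fin (p' + m') → ℂ)
    (hDp : ∀ a, Dp a = ∑ b ∈ Finset.univ.filter (fun b => b < a), ξ b)
    (hξsum : ∑ a, ξ a = d) :
    (Matrix.of fun uu vv : Fin (p+m) =>
        ANf (p'+m') γ lp (Zv d p m) (fun i => cK d p m (z i)) ↑uu ↑vv)ᵀ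
      - CmM d p m * (Matrix.of fun α β : Fin d =>
          RNf d' ξ Dp (Wv d p m) (fun a => cK d p m (w a)) ↑α ↑β) * BmM d p m
      = (Lgls d p m d' p' m' ξ Dp γ lp w z)ᵀ := by
  ext u v
  have hstep1 : (CmM d p m * (Matrix.of fun α β : Fin d =>
      RNf d' ξ Dp (Wv d p m) (fun a => cK d p m (w a)) ↑α ↑β) * BmM d p m) u v
      = ∑ αf : Fin d, ∑ βf : Fin d,
          RNf d' ξ Dp (Wv d p m) (fun a => cK d p m (w a)) ↑αf ↑βf *
          (fun n mm => (if (u:ℕ) < p then -yv d p m n ↑u else pxv d p m n (↑u - p)) *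
            (if (v:ℕ) < p then pyv d p m mm ↑v else xv d p m mm (↑v - p))) ↑αf ↑βf := by
    rw [Matrix.mul_apply]
    rw [Finset.sum_comm]
    refine Finset.sum_congr rfl fun αf _ => ?_
    simp only [Matrix.mul_apply, Finset.sum_mul]
    refine Finset.sum_congr rfl fun βf _ => ?_
    simp only [Matrix.of_apply, BmM, CmM]
    ring
  have hpair := RN_pairing (N := d) (t := Wv d p m)
    (ev := fun a => cK d p m (w a)) hDp hξsum
    (fun n mm => (if (u:ℕ) < p then -yv d p m n ↑u else pxv d p m n (↑u - p)) *
      (if (v:ℕ) < p then pyv d p m mm ↑v else xv d p m mm (↑v - p)))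
  rw [Matrix.sub_apply, Matrix.transpose_apply, Matrix.transpose_apply, Matrix.of_apply,
    ← AN_entry, hstep1, hpair]
  simp only [Lgls]
  have e : ∀ a : Fin d', ∀ k ∈ Finset.range (ξ a),
      (((Wv d p m - cK d p m (w a))⁻¹) ^ (k + 1) *
        ∑ r ∈ Finset.range (ξ a - k),
          (if (u:ℕ) < p then -yv d p m (Dp a + r) ↑u else pxv d p m (Dp a + r) (↑u - p)) *
          (if (v:ℕ) < p then pyv d p m (Dp a + r + k) ↑v
            else xv d p m (Dp a + r + k) (↑v - p)))
      = ((Wv d p m - cK d p m (w a))⁻¹) ^ (k + 1) * Cgls d p m d' ξ Dp a k v u := by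
    intro a k _
    congr 1
    by_cases hu : (u:ℕ) < p <;> by_cases hv : (v:ℕ) < p
    · rw [show Cgls d p m d' ξ Dp a k v u
          = -∑ r ∈ Finset.range (ξ a - k),
              pyv d p m (Dp a + r + k) ↑v * yv d p m (Dp a + r) ↑u from by
        simp only [Cgls]; rw [if_pos hv, if_pos hu]]
      rw [← Finset.sum_neg_distrib]
      refine Finset.sum_congr rfl fun r _ => ?_
      rw [if_pos hu, if_pos hv]; ring
    · rw [show Cgls d p m d' ξ Dp a k v u
          = -∑ r ∈ Finset.range (ξ a - k),
              xv d p m (Dp a + r + k) (↑v - p) * yv d p m (Dp a + r) ↑u from by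
        simp only [Cgls]; rw [if_neg hv, if_pos hu]]
      rw [← Finset.sum_neg_distrib]
      refine Finset.sum_congr rfl fun r _ => ?_
      rw [if_pos hu, if_neg hv]; ring
    · rw [show Cgls d p m d' ξ Dp a k v u
          = ∑ r ∈ Finset.range (ξ a - k),
              pyv d p m (Dp a + r + k) ↑v * pxv d p m (Dp a + r) (↑u - p) from by
        simp only [Cgls]; rw [if_pos hv, if_neg hu]]
      refine Finset.sum_congr rfl fun r _ => ?_
      rw [if_neg hu, if_pos hv]; ring
    · rw [show Cgls d p m d' ξ Dp a k v u
          = ∑ r ∈ Finset.range (ξ a - k),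
              xv d p m (Dp a + r + k) (↑v - p) * pxv d p m (Dp a + r) (↑u - p) from by
        simp only [Cgls]; rw [if_neg hv, if_neg hu]]
      refine Finset.sum_congr rfl fun r _ => ?_
      rw [if_neg hu, if_neg hv]; ring
  rw [Finset.sum_congr rfl (fun a _ => Finset.sum_congr rfl (e a))]

end EntryAux

/-- the `q = n = 0` case of Theorem 5.4 of the paper: the duality of
`(gl_d, gl_{p+m})` for classical Gaudin models with irregular singularities:
`Π_{i=1}^{ℓ} (Z - z_i)^{γ_i} · det L = Π_{a=1}^{d'} (W - w_a)^{ξ_a} · det L'`. -/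
theorem stmt15 (d p m d' p' m' : ℕ)
    (hd : 1 ≤ d) (hpm : 1 ≤ p + m) (hd' : 1 ≤ d') (hℓ : 1 ≤ p' + m')
    (ξ : Fin d' → ℕ) (hξ : ∀ a, 0 < ξ a) (hξsum : ∑ a, ξ a = d)
    (Dp : Fin d' → ℕ)
    (hDp : ∀ a, Dp a = ∑ b ∈ Finset.univ.filter (fun b => b < a), ξ b)
    (γ : Fin (p' + m') → ℕ) (hγ : ∀ i, 0 < γ i)
    (hγp : ∑ i ∈ Finset.univ.filter (fun i : Fin (p' + m') => (i : ℕ) < p'), γ i = p)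
    (hγm : ∑ i ∈ Finset.univ.filter (fun i : Fin (p' + m') => p' ≤ (i : ℕ)), γ i = m)
    (lp : Fin (p' + m') → ℕ)
    (hlp : ∀ i, lp i = ∑ j ∈ Finset.univ.filter (fun j => j < i), γ j)
    (w : Fin d' → ℂ) (z : Fin (p' + m') → ℂ) :
    (∏ i : Fin (p' + m'), (Zv d p m - cK d p m (z i)) ^ (γ i)) *
        (Lgld d p m d' p' m' ξ Dp γ lp w z).det
      = (∏ a : Fin d', (Wv d p m - cK d p m (w a)) ^ (ξ a)) *
          (Lgls d p m d' p' m' ξ Dp γ lp w z).det := by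
  classical
  -- the two indeterminates minus constants are nonzero in the fraction field
  have hinj : Function.Injective (algebraMap (MvPolynomial (GIdx d p m) ℂ) (GK d p m)) :=
    IsFractionRing.injective _ _
  have hXC : ∀ (idx : GIdx d p m) (c : ℂ), toGK (X idx) - cK d p m c ≠ 0 := by
    intro idx c h
    have h3 : (X idx : MvPolynomial (GIdx d p m) ℂ) - MvPolynomial.C c = 0 := by
      apply hinj
      rw [map_sub, map_zero]
      exact h
    have h4 : (X idx : MvPolynomial (GIdx d p m) ℂ) = MvPolynomial.C c :=
      sub_eq_zero.mp h3
    have h5 := congrArg MvPolynomial.totalDegree h4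
    rw [MvPolynomial.totalDegree_X, MvPolynomial.totalDegree_C] at h5
    exact one_ne_zero h5
  have hWne : ∀ a : Fin d', Wv d p m - cK d p m (w a) ≠ 0 := fun a => hXC _ (w a)
  have hZne : ∀ i : Fin (p' + m'), Zv d p m - cK d p m (z i) ≠ 0 := fun i => hXC _ (z i)
  -- total size of the γ blocks
  have hγsum : ∑ i, γ i = p + m := by
    rw [← Finset.sum_filter_add_sum_filter_not Finset.univ
      (fun i : Fin (p' + m') => (i : ℕ) < p') γ, hγp,
      show (Finset.univ.filter (fun i : Fin (p' + m') => ¬ (i : ℕ) < p'))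
          = (Finset.univ.filter (fun i : Fin (p' + m') => p' ≤ (i : ℕ))) from by
        ext i; simp [not_lt], hγm]
  -- bounds for the split of the γ blocks into bosonic/fermionic parts
  have hb1 : ∀ i : Fin (p' + m'), (i : ℕ) < p' → lp i + γ i ≤ p := by
    intro i hi
    have hsub : insert i (Finset.univ.filter (· < i))
        ⊆ Finset.univ.filter (fun j : Fin (p' + m') => (j : ℕ) < p') := by
      intro c hc
      simp only [Finset.mem_insert, Finset.mem_filter, Finset.mem_univ, true_and] at *
      rcases hc with rfl | h
      · exact hi
      · have : (c : ℕ) < (i : ℕ) := h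
        omega
    calc lp i + γ i = ∑ c ∈ insert i (Finset.univ.filter (· < i)), γ c := by
          rw [Finset.sum_insert (by simp), hlp i, add_comm]
      _ ≤ ∑ j ∈ Finset.univ.filter (fun j : Fin (p' + m') => (j : ℕ) < p'), γ j :=
          Finset.sum_le_sum_of_subset hsub
      _ = p := hγp
  have hb2 : ∀ i : Fin (p' + m'), p' ≤ (i : ℕ) → p ≤ lp i := by
    intro i hi
    rw [← hγp, hlp i]
    apply Finset.sum_le_sum_of_subset
    intro c hc
    simp only [Finset.mem_filter, Finset.mem_univ, true_and] at *
    have : (c : ℕ) < p' := hc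
    show (c : ℕ) < (i : ℕ)
    omega
  -- the four structured matrices
  set AW : Matrix (Fin d) (Fin d) (GK d p m) :=
    Matrix.of fun α β : Fin d =>
      ANf d' ξ Dp (Wv d p m) (fun a => cK d p m (w a)) ↑α ↑β with hAW
  set RW : Matrix (Fin d) (Fin d) (GK d p m) :=
    Matrix.of fun α β : Fin d =>
      RNf d' ξ Dp (Wv d p m) (fun a => cK d p m (w a)) ↑α ↑β with hRW
  set AZ : Matrix (Fin (p+m)) (Fin (p+m)) (GK d p m) :=
    Matrix.of fun uu vv : Fin (p+m) =>
      ANf (p'+m') γ lp (Zv d p m) (fun i => cK d p m (z i)) ↑uu ↑vv with hAZ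
  set RZ : Matrix (Fin (p+m)) (Fin (p+m)) (GK d p m) :=
    Matrix.of fun uu vv : Fin (p+m) =>
      RNf (p'+m') γ lp (Zv d p m) (fun i => cK d p m (z i)) ↑uu ↑vv with hRZ
  have hARW : AW * RW = 1 := AN_mul_RN hDp hξsum hWne
  have hARZ : AZ * RZ = 1 := AN_mul_RN hlp hγsum hZne
  have hRAZ : RZ * AZ = 1 := mul_eq_one_comm.mp hARZ
  have hDZR : AZ.transpose * RZ.transpose = 1 := by
    rw [← Matrix.transpose_mul, hRAZ, Matrix.transpose_one]
  letI iA : Invertible AW := invertibleOfRightInverse _ _ hARW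
  letI iD : Invertible AZ.transpose := invertibleOfRightInverse _ _ hDZR
  have hinvA : ⅟AW = RW := invOf_eq_right_inv hARW
  have hinvD : ⅟(AZ.transpose) = RZ.transpose := invOf_eq_right_inv hDZR
  have h11 := Matrix.det_fromBlocks₁₁ AW (BmM d p m) (CmM d p m) AZ.transpose
  have h22 := Matrix.det_fromBlocks₂₂ AW (BmM d p m) (CmM d p m) AZ.transpose
  rw [hinvA] at h11
  rw [hinvD] at h22
  have hdetA : AW.det = ∏ a : Fin d', (Wv d p m - cK d p m (w a)) ^ (ξ a) :=
    det_AN hDp hξsum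
  have hdetD : (AZ.transpose).det
      = ∏ i : Fin (p' + m'), (Zv d p m - cK d p m (z i)) ^ (γ i) := by
    rw [Matrix.det_transpose]
    exact det_AN hlp hγsum
  have hL : AW - BmM d p m * RZ.transpose * CmM d p m
      = Lgld d p m d' p' m' ξ Dp γ lp w z :=
    schur_L d p m d' p' m' ξ Dp γ lp w z hlp hb1 hb2 hγsum
  have hL' : AZ.transpose - CmM d p m * RW * BmM d p m
      = (Lgls d p m d' p' m' ξ Dp γ lp w z).transpose :=
    schur_L' d p m d' p' m' ξ Dp γ lp w z hDp hξsum
  calc (∏ i : Fin (p' + m'), (Zv d p m - cK d p m (z i)) ^ (γ i)) *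
        (Lgld d p m d' p' m' ξ Dp γ lp w z).det
      = (AZ.transpose).det * (AW - BmM d p m * RZ.transpose * CmM d p m).det := by
        rw [hdetD, hL]
    _ = (Matrix.fromBlocks AW (BmM d p m) (CmM d p m) AZ.transpose).det := h22.symm
    _ = AW.det * (AZ.transpose - CmM d p m * RW * BmM d p m).det := h11
    _ = (∏ a : Fin d', (Wv d p m - cK d p m (w a)) ^ (ξ a)) *
          ((Lgls d p m d' p' m' ξ Dp γ lp w z).transpose).det := by
        rw [hdetA, hL']
    _ = (∏ a : Fin d', (Wv d p m - cK d p m (w a)) ^ (ξ a)) *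
          (Lgls d p m d' p' m' ξ Dp γ lp w z).det := by
        rw [Matrix.det_transpose]
end
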